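/- arXiv:2504.13036 — 7 statements merged into one kernel-verified Lean document; each statement's English description precedes it below -/
import Mathlib

section
/- Energy dissipation for the generalized energy-based system: Suppose z₁ : [t₀,t_f] → ℝ^{n₁}, z₂ : [t₀,t_f] → ℝ^{n₂}, z₃ : [t₀,t_f] → ℝ^{n₃} are continuously differentiable, H : ℝ^{n₁} × ℝ^{n₂} → ℝ is C¹, e : ℝ^{n₁} × ℝ^{n₂} → ℝ^{n₂} is continuous with Eᵀ e(z₁,z₂) = ∇_{z₂} H(z₁,z₂) for all (z₁,z₂), and along the trajectory the equation [∇_{z₁}H; E ż₂; 0] = (J - R)[ż₁; e(z₁,z₂); z₃] + B u holds with J skew-symmetric, R symmetric positive semi-definite, and y = Bᵀ [ż₁; e(z₁,z₂); z₃]. Then d/dt H(z₁(t), z₂(t)) ≤ ⟨y(t), u(t)⟩ for all t; in particular if u ≡ 0 then H(z₁(t),z₂(t)) is non-increasing. -/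
/-!
Pairing the system equation with the flow vector `v = [ż₁; e(z₁,z₂); z₃]` gives the power balance:
by `Eᵀ e = ∇_{z₂}H` the left-hand side pairs to `d/dt H`, the skew part `J` contributes nothing,
`R ⪰ 0` contributes `-⟨v, R v⟩ ≤ 0`, and the input term pairs to `⟨Bᵀ v, u⟩ = ⟨y, u⟩`.
With `u ≡ 0` the derivative of `H` along the trajectory is nonpositive, so `H` is antitone.
-/

open Matrix

lemma Matrix.dotProduct_mulVec_self_eq_zero_of_transpose_eq_neg {ι α : Type*} [Fintype ι]
    [CommRing α] [IsAddTorsionFree α] {J : Matrix ι ι α} (hJ : Jᵀ = -J) (v : ι → α) :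
    v ⬝ᵥ (J *ᵥ v) = 0 :=
  self_eq_neg.mp <| by
    conv_lhs => rw [dotProduct_mulVec, ← mulVec_transpose, hJ, neg_mulVec, neg_dotProduct, dotProduct_comm]

lemma Matrix.dotProduct_le_of_eq_skew_sub_posSemidef {ι κ : Type*} [Fintype ι] [Fintype κ]
    {J R : Matrix ι ι ℝ} {B : Matrix ι κ ℝ} (hJ : Jᵀ = -J) (hR : R.PosSemidef)
    {f v : ι → ℝ} {u : κ → ℝ} (hf : f = (J - R) *ᵥ v + B *ᵥ u) :
    f ⬝ᵥ v ≤ (Bᵀ *ᵥ v) ⬝ᵥ u := by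
  have hskew := dotProduct_mulVec_self_eq_zero_of_transpose_eq_neg hJ v
  have hdiss : 0 ≤ v ⬝ᵥ (R *ᵥ v) := by simpa using hR.dotProduct_mulVec_nonneg v
  have hinput : (Bᵀ *ᵥ v) ⬝ᵥ u = v ⬝ᵥ (B *ᵥ u) := by
    rw [mulVec_transpose, dotProduct_mulVec]
  rw [hinput, hf, dotProduct_comm, dotProduct_add, sub_mulVec, dotProduct_sub, hskew]
  linarith

lemma Matrix.sumElim_dotProduct_sumElim_of_transpose_mulVec_eq {ι₁ ι₂ ι₃ α : Type*}
    [Fintype ι₁] [Fintype ι₂] [Fintype ι₃] [CommRing α] (E : Matrix ι₂ ι₂ α)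
    (g₁ x₁ : ι₁ → α) (g₂ x₂ e : ι₂ → α) (x₃ : ι₃ → α) (hE : Eᵀ *ᵥ e = g₂) :
    Sum.elim g₁ (Sum.elim (E *ᵥ x₂) 0) ⬝ᵥ Sum.elim x₁ (Sum.elim e x₃) = g₁ ⬝ᵥ x₁ + g₂ ⬝ᵥ x₂ := by
  rw [sumElim_dotProduct_sumElim, sumElim_dotProduct_sumElim, zero_dotProduct, add_zero,
    dotProduct_comm (E *ᵥ x₂), dotProduct_mulVec, ← mulVec_transpose, hE]

theorem stmt_1_general {n₁ n₂ n₃ m : ℕ}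
    (t₀ tf : ℝ)
    (z₁ : ℝ → Fin n₁ → ℝ) (z₂ : ℝ → Fin n₂ → ℝ) (z₃ : ℝ → Fin n₃ → ℝ)
    (z₁' : ℝ → Fin n₁ → ℝ) (z₂' : ℝ → Fin n₂ → ℝ)
    (H : (Fin n₁ → ℝ) → (Fin n₂ → ℝ) → ℝ)
    (g₁ : (Fin n₁ → ℝ) → (Fin n₂ → ℝ) → Fin n₁ → ℝ)
    (g₂ : (Fin n₁ → ℝ) → (Fin n₂ → ℝ) → Fin n₂ → ℝ)
    (e : (Fin n₁ → ℝ) → (Fin n₂ → ℝ) → Fin n₂ → ℝ)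
    (E : Matrix (Fin n₂) (Fin n₂) ℝ)
    (J R : Matrix (Fin n₁ ⊕ (Fin n₂ ⊕ Fin n₃)) (Fin n₁ ⊕ (Fin n₂ ⊕ Fin n₃)) ℝ)
    (B : Matrix (Fin n₁ ⊕ (Fin n₂ ⊕ Fin n₃)) (Fin m) ℝ)
    (u y : ℝ → Fin m → ℝ)
    (hJ : Jᵀ = -J) (hR : R.PosSemidef)
    -- chain rule for the C¹ Hamiltonian along the C¹ trajectory, with
    -- gradients g₁ = ∇_{z₁}H and g₂ = ∇_{z₂}H
    (hH : ∀ t ∈ Set.Icc t₀ tf,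
      HasDerivAt (fun s => H (z₁ s) (z₂ s))
        (g₁ (z₁ t) (z₂ t) ⬝ᵥ z₁' t + g₂ (z₁ t) (z₂ t) ⬝ᵥ z₂' t) t)
    -- the effort condition  Eᵀ e(z₁,z₂) = ∇_{z₂}H(z₁,z₂)
    (hE : ∀ x₁ x₂, Eᵀ *ᵥ e x₁ x₂ = g₂ x₁ x₂)
    -- the generalized energy-based system equation
    (heq : ∀ t ∈ Set.Icc t₀ tf,
      Sum.elim (g₁ (z₁ t) (z₂ t)) (Sum.elim (E *ᵥ z₂' t) 0)
        = (J - R) *ᵥ Sum.elim (z₁' t) (Sum.elim (e (z₁ t) (z₂ t)) (z₃ t))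
          + B *ᵥ u t)
    -- the output equation
    (hy : ∀ t ∈ Set.Icc t₀ tf,
      y t = Bᵀ *ᵥ Sum.elim (z₁' t) (Sum.elim (e (z₁ t) (z₂ t)) (z₃ t))) :
    (∀ t ∈ Set.Icc t₀ tf,
      HasDerivAt (fun s => H (z₁ s) (z₂ s))
        (g₁ (z₁ t) (z₂ t) ⬝ᵥ z₁' t + g₂ (z₁ t) (z₂ t) ⬝ᵥ z₂' t) t ∧
      g₁ (z₁ t) (z₂ t) ⬝ᵥ z₁' t + g₂ (z₁ t) (z₂ t) ⬝ᵥ z₂' t ≤ y t ⬝ᵥ u t) ∧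
    ((∀ t ∈ Set.Icc t₀ tf, u t = 0) →
      ∀ s ∈ Set.Icc t₀ tf, ∀ t ∈ Set.Icc t₀ tf, s ≤ t →
        H (z₁ t) (z₂ t) ≤ H (z₁ s) (z₂ s)) := by
  have power_balance : ∀ t ∈ Set.Icc t₀ tf,
      g₁ (z₁ t) (z₂ t) ⬝ᵥ z₁' t + g₂ (z₁ t) (z₂ t) ⬝ᵥ z₂' t ≤ y t ⬝ᵥ u t := fun t ht => by
    rw [← sumElim_dotProduct_sumElim_of_transpose_mulVec_eq E _ _ _ _ _ (z₃ t) (hE _ _), hy t ht]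
    exact dotProduct_le_of_eq_skew_sub_posSemidef hJ hR (heq t ht)
  refine ⟨fun t ht => ⟨hH t ht, power_balance t ht⟩, fun hu => ?_⟩
  have hanti : AntitoneOn (fun s => H (z₁ s) (z₂ s)) (Set.Icc t₀ tf) :=
    antitoneOn_of_hasDerivWithinAt_nonpos (convex_Icc t₀ tf)
      (fun t ht => (hH t ht).continuousAt.continuousWithinAt)
      (fun t ht => (hH t (interior_subset ht)).hasDerivWithinAt)
      (fun t ht => by simpa [hu t (interior_subset ht)] using power_balance t (interior_subset ht))
  exact fun s hs t ht hst => hanti hs ht hst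

theorem stmt_1 {n₁ n₂ n₃ m : ℕ}
    (t₀ tf : ℝ)
    (z₁ : ℝ → Fin n₁ → ℝ) (z₂ : ℝ → Fin n₂ → ℝ) (z₃ : ℝ → Fin n₃ → ℝ)
    (z₁' : ℝ → Fin n₁ → ℝ) (z₂' : ℝ → Fin n₂ → ℝ)
    (H : (Fin n₁ → ℝ) → (Fin n₂ → ℝ) → ℝ)
    (g₁ : (Fin n₁ → ℝ) → (Fin n₂ → ℝ) → Fin n₁ → ℝ)
    (g₂ : (Fin n₁ → ℝ) → (Fin n₂ → ℝ) → Fin n₂ → ℝ)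
    (e : (Fin n₁ → ℝ) → (Fin n₂ → ℝ) → Fin n₂ → ℝ)
    (E : Matrix (Fin n₂) (Fin n₂) ℝ)
    (J R : Matrix (Fin n₁ ⊕ (Fin n₂ ⊕ Fin n₃)) (Fin n₁ ⊕ (Fin n₂ ⊕ Fin n₃)) ℝ)
    (B : Matrix (Fin n₁ ⊕ (Fin n₂ ⊕ Fin n₃)) (Fin m) ℝ)
    (u y : ℝ → Fin m → ℝ)
    (hJ : Jᵀ = -J) (hR : R.PosSemidef)
    (hz₁ : ∀ t ∈ Set.Icc t₀ tf, ∀ i, HasDerivAt (fun s => z₁ s i) (z₁' t i) t)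
    (hz₂ : ∀ t ∈ Set.Icc t₀ tf, ∀ i, HasDerivAt (fun s => z₂ s i) (z₂' t i) t)
    -- chain rule for the C¹ Hamiltonian along the C¹ trajectory, with
    -- gradients g₁ = ∇_{z₁}H and g₂ = ∇_{z₂}H
    (hH : ∀ t ∈ Set.Icc t₀ tf,
      HasDerivAt (fun s => H (z₁ s) (z₂ s))
        (g₁ (z₁ t) (z₂ t) ⬝ᵥ z₁' t + g₂ (z₁ t) (z₂ t) ⬝ᵥ z₂' t) t)
    -- the effort condition  Eᵀ e(z₁,z₂) = ∇_{z₂}H(z₁,z₂)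
    (hE : ∀ x₁ x₂, Eᵀ *ᵥ e x₁ x₂ = g₂ x₁ x₂)
    -- the generalized energy-based system equation
    (heq : ∀ t ∈ Set.Icc t₀ tf,
      Sum.elim (g₁ (z₁ t) (z₂ t)) (Sum.elim (E *ᵥ z₂' t) 0)
        = (J - R) *ᵥ Sum.elim (z₁' t) (Sum.elim (e (z₁ t) (z₂ t)) (z₃ t))
          + B *ᵥ u t)
    -- the output equation
    (hy : ∀ t ∈ Set.Icc t₀ tf,
      y t = Bᵀ *ᵥ Sum.elim (z₁' t) (Sum.elim (e (z₁ t) (z₂ t)) (z₃ t))) :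
    (∀ t ∈ Set.Icc t₀ tf,
      HasDerivAt (fun s => H (z₁ s) (z₂ s))
        (g₁ (z₁ t) (z₂ t) ⬝ᵥ z₁' t + g₂ (z₁ t) (z₂ t) ⬝ᵥ z₂' t) t ∧
      g₁ (z₁ t) (z₂ t) ⬝ᵥ z₁' t + g₂ (z₁ t) (z₂ t) ⬝ᵥ z₂' t ≤ y t ⬝ᵥ u t) ∧
    ((∀ t ∈ Set.Icc t₀ tf, u t = 0) →
      ∀ s ∈ Set.Icc t₀ tf, ∀ t ∈ Set.Icc t₀ tf, s ≤ t →
        H (z₁ t) (z₂ t) ≤ H (z₁ s) (z₂ s)) :=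
  stmt_1_general t₀ tf z₁ z₂ z₃ z₁' z₂' H g₁ g₂ e E J R B u y hJ hR hH hE heq hy
end

section
/- Structure preservation under interconnection: given two energy-based systems of the form [∇_{z₁}H⁽ⁱ⁾; E⁽ⁱ⁾ż₂⁽ⁱ⁾; 0] = (J⁽ⁱ⁾ - R⁽ⁱ⁾)[ż₁⁽ⁱ⁾; e⁽ⁱ⁾; z₃⁽ⁱ⁾] + B⁽ⁱ⁾u⁽ⁱ⁾ with outputs y⁽ⁱ⁾ = B⁽ⁱ⁾ᵀ[ż₁⁽ⁱ⁾; e⁽ⁱ⁾; z₃⁽ⁱ⁾], coupled by (u⁽¹⁾; u⁽²⁾) = (F_skew - F_sym)(y⁽¹⁾; y⁽²⁾) + (ũ⁽¹⁾; ũ⁽²⁾) with F_skew skew-symmetric and F_sym symmetric positive semi-definite, the coupled state (z⁽¹⁾, z⁽²⁾) satisfies a system of the same form with Hamiltonian H = H⁽¹⁾ + H⁽²⁾, structure matrix 𝒥 = J + B F_skew Bᵀ (skew-symmetric) and dissipation matrix ℛ = R + B F_sym Bᵀ (symmetric positive semi-definite), where J, R, B are block-assembled from the subsystem matrices, and input ũ.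 -/
/-!
Reordering coordinates by `shuffle` turns `J`, `R`, `B` and `E` into block-diagonal matrices, so
the two subsystem equations stack into one equation for the combined flow `ξ = (ż₁, e, z₃)`, with
output `y = Bᵀ ξ`. Substituting the coupling `u = (F_skew - F_sym) Bᵀ ξ + ũ` moves
`B (F_skew - F_sym) Bᵀ` into the system matrix, and the congruences `B F_skew Bᵀ` and
`B F_sym Bᵀ` are again skew-symmetric and positive semi-definite.
-/

open Matrix

/-- The permutation sending the interleaved grouping
`(a₁ ⊕ a₂) ⊕ (b₁ ⊕ b₂) ⊕ (c₁ ⊕ c₂)` of the coupled state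
`((z₁¹,z₁²),(z₂¹,z₂²),(z₃¹,z₃²))` to the stacked grouping
`(a₁ ⊕ b₁ ⊕ c₁) ⊕ (a₂ ⊕ b₂ ⊕ c₂)` of the two subsystem states. -/
def shuffle {a1 a2 b1 b2 c1 c2 : Type*} :
    (a1 ⊕ a2) ⊕ ((b1 ⊕ b2) ⊕ (c1 ⊕ c2)) → (a1 ⊕ (b1 ⊕ c1)) ⊕ (a2 ⊕ (b2 ⊕ c2))
  | .inl (.inl x) => .inl (.inl x)
  | .inl (.inr x) => .inr (.inl x)
  | .inr (.inl (.inl x)) => .inl (.inr (.inl x))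
  | .inr (.inl (.inr x)) => .inr (.inr (.inl x))
  | .inr (.inr (.inl x)) => .inl (.inr (.inr x))
  | .inr (.inr (.inr x)) => .inr (.inr (.inr x))

namespace Matrix

variable {l m n o α : Type*}

theorem fromBlocks_zero_zero_mulVec_sumElim [Fintype n] [Fintype o]
    [NonUnitalNonAssocSemiring α] (A : Matrix l n α) (D : Matrix m o α) (v : n → α)
    (w : o → α) : fromBlocks A 0 0 D *ᵥ Sum.elim v w = Sum.elim (A *ᵥ v) (D *ᵥ w) := by
  simp [fromBlocks_mulVec]

theorem fromBlocks_sub [Sub α] (A : Matrix n l α) (B : Matrix n m α) (C : Matrix o l α)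
    (D : Matrix o m α) (A' : Matrix n l α) (B' : Matrix n m α) (C' : Matrix o l α)
    (D' : Matrix o m α) : fromBlocks A B C D - fromBlocks A' B' C' D' =
      fromBlocks (A - A') (B - B') (C - C') (D - D') := by
  ext (i | i) (j | j) <;> rfl

theorem transpose_fromBlocks_zero_zero_eq_neg [AddGroup α] {A : Matrix m m α}
    {D : Matrix n n α} (hA : Aᵀ = -A) (hD : Dᵀ = -D) :
    (fromBlocks A 0 0 D)ᵀ = -fromBlocks A 0 0 D := by
  simp only [fromBlocks_transpose, fromBlocks_neg, hA, hD, transpose_zero, neg_zero]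

theorem transpose_submatrix_eq_neg [Neg α] {A : Matrix m m α} (hA : Aᵀ = -A) (f : l → m) :
    (A.submatrix f f)ᵀ = -A.submatrix f f := by
  rw [transpose_submatrix, hA]
  rfl

theorem transpose_mul_mul_transpose_eq_neg [Fintype m] [CommRing α] (B : Matrix n m α)
    {F : Matrix m m α} (hF : Fᵀ = -F) : (B * F * Bᵀ)ᵀ = -(B * F * Bᵀ) := by
  rw [transpose_mul, transpose_mul, transpose_transpose, hF, Matrix.neg_mul, Matrix.mul_neg,
    Matrix.mul_assoc]

theorem PosSemidef.fromBlocks_zero_zero [Ring α] [PartialOrder α] [StarRing α] [AddLeftMono α]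
    [Fintype m] [Fintype n] {A : Matrix m m α} {D : Matrix n n α} (hA : A.PosSemidef)
    (hD : D.PosSemidef) : (fromBlocks A 0 0 D).PosSemidef := by
  refine .of_dotProduct_mulVec_nonneg (hA.1.fromBlocks conjTranspose_zero hD.1) fun x => ?_
  rw [← Sum.elim_comp_inl_inr x, fromBlocks_zero_zero_mulVec_sumElim, Function.star_sumElim,
    sumElim_dotProduct_sumElim]
  exact add_nonneg (hA.dotProduct_mulVec_nonneg _) (hD.dotProduct_mulVec_nonneg _)

theorem submatrix_mulVec_comp_equiv [Fintype n] [Fintype o] [NonUnitalNonAssocSemiring α]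
    (M : Matrix m n α) (f : l → m) (e : o ≃ n) (v : n → α) :
    M.submatrix f e *ᵥ (v ∘ e) = (M *ᵥ v) ∘ f := by
  rw [submatrix_mulVec_equiv, Function.comp_assoc, Equiv.self_comp_symm, Function.comp_id]

theorem sub_add_mul_mul_transpose_mulVec_add [Fintype m] [Fintype n] [Ring α]
    (J R : Matrix n n α) (B : Matrix n m α) (F G : Matrix m m α) (x : n → α) (u v : m → α)
    (hu : u = (F - G) *ᵥ (Bᵀ *ᵥ x) + v) :
    (J + B * F * Bᵀ - (R + B * G * Bᵀ)) *ᵥ x + B *ᵥ v = (J - R) *ᵥ x + B *ᵥ u := by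
  have hsplit : J + B * F * Bᵀ - (R + B * G * Bᵀ) = (J - R) + B * (F - G) * Bᵀ := by
    rw [Matrix.mul_sub, Matrix.sub_mul]
    abel
  rw [hsplit, add_mulVec, ← mulVec_mulVec, ← mulVec_mulVec, hu, mulVec_add, add_assoc]

end Matrix

section Shuffle

variable {a1 a2 b1 b2 c1 c2 α : Type*}

def shuffleEquiv :
    (a1 ⊕ a2) ⊕ ((b1 ⊕ b2) ⊕ (c1 ⊕ c2)) ≃ (a1 ⊕ (b1 ⊕ c1)) ⊕ (a2 ⊕ (b2 ⊕ c2)) where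
  toFun := shuffle
  invFun
    | .inl (.inl x) => .inl (.inl x)
    | .inl (.inr (.inl x)) => .inr (.inl (.inl x))
    | .inl (.inr (.inr x)) => .inr (.inr (.inl x))
    | .inr (.inl x) => .inl (.inr x)
    | .inr (.inr (.inl x)) => .inr (.inl (.inr x))
    | .inr (.inr (.inr x)) => .inr (.inr (.inr x))
  left_inv := by rintro ((x | x) | ((x | x) | (x | x))) <;> rfl
  right_inv := by rintro ((x | (x | x)) | (x | (x | x))) <;> rfl

theorem sumElim_comp_shuffle (p₁ : a1 → α) (q₁ : b1 → α) (r₁ : c1 → α) (p₂ : a2 → α)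
    (q₂ : b2 → α) (r₂ : c2 → α) :
    Sum.elim (Sum.elim p₁ (Sum.elim q₁ r₁)) (Sum.elim p₂ (Sum.elim q₂ r₂)) ∘ shuffle =
      Sum.elim (Sum.elim p₁ p₂) (Sum.elim (Sum.elim q₁ q₂) (Sum.elim r₁ r₂)) := by
  ext ((x | x) | ((x | x) | (x | x))) <;> rfl

theorem submatrix_shuffle_mulVec_comp_shuffle [Fintype a1] [Fintype a2] [Fintype b1]
    [Fintype b2] [Fintype c1] [Fintype c2] [NonUnitalNonAssocSemiring α] {l m : Type*}
    (M : Matrix m ((a1 ⊕ (b1 ⊕ c1)) ⊕ (a2 ⊕ (b2 ⊕ c2))) α) (f : l → m)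
    (v : (a1 ⊕ (b1 ⊕ c1)) ⊕ (a2 ⊕ (b2 ⊕ c2)) → α) :
    M.submatrix f shuffle *ᵥ (v ∘ shuffle) = (M *ᵥ v) ∘ f :=
  M.submatrix_mulVec_comp_equiv f shuffleEquiv v

end Shuffle

theorem stmt_4_general {a1 b1 c1 a2 b2 c2 m1 m2 : ℕ}
    (t₀ tf : ℝ)
    -- subsystem 1
    (w₁ : ℝ → Fin a1 → ℝ) (w₂ : ℝ → Fin b1 → ℝ) (w₃ : ℝ → Fin c1 → ℝ)
    (w₁' : ℝ → Fin a1 → ℝ) (w₂' : ℝ → Fin b1 → ℝ)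
    (g11 : (Fin a1 → ℝ) → (Fin b1 → ℝ) → Fin a1 → ℝ)
    (g12 : (Fin a1 → ℝ) → (Fin b1 → ℝ) → Fin b1 → ℝ)
    (e1 : (Fin a1 → ℝ) → (Fin b1 → ℝ) → Fin b1 → ℝ)
    (E1 : Matrix (Fin b1) (Fin b1) ℝ)
    (J1 R1 : Matrix (Fin a1 ⊕ (Fin b1 ⊕ Fin c1)) (Fin a1 ⊕ (Fin b1 ⊕ Fin c1)) ℝ)
    (B1 : Matrix (Fin a1 ⊕ (Fin b1 ⊕ Fin c1)) (Fin m1) ℝ)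
    (u1 y1 : ℝ → Fin m1 → ℝ)
    (hJ1 : J1ᵀ = -J1) (hR1 : R1.PosSemidef)
    (hE1 : ∀ x₁ x₂, E1ᵀ *ᵥ e1 x₁ x₂ = g12 x₁ x₂)
    (heq1 : ∀ t ∈ Set.Icc t₀ tf,
      Sum.elim (g11 (w₁ t) (w₂ t)) (Sum.elim (E1 *ᵥ w₂' t) 0)
        = (J1 - R1) *ᵥ Sum.elim (w₁' t) (Sum.elim (e1 (w₁ t) (w₂ t)) (w₃ t))
          + B1 *ᵥ u1 t)
    (hy1 : ∀ t ∈ Set.Icc t₀ tf,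
      y1 t = B1ᵀ *ᵥ Sum.elim (w₁' t) (Sum.elim (e1 (w₁ t) (w₂ t)) (w₃ t)))
    -- subsystem 2
    (x₁ : ℝ → Fin a2 → ℝ) (x₂ : ℝ → Fin b2 → ℝ) (x₃ : ℝ → Fin c2 → ℝ)
    (x₁' : ℝ → Fin a2 → ℝ) (x₂' : ℝ → Fin b2 → ℝ)
    (g21 : (Fin a2 → ℝ) → (Fin b2 → ℝ) → Fin a2 → ℝ)
    (g22 : (Fin a2 → ℝ) → (Fin b2 → ℝ) → Fin b2 → ℝ)
    (e2 : (Fin a2 → ℝ) → (Fin b2 → ℝ) → Fin b2 → ℝ)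
    (E2 : Matrix (Fin b2) (Fin b2) ℝ)
    (J2 R2 : Matrix (Fin a2 ⊕ (Fin b2 ⊕ Fin c2)) (Fin a2 ⊕ (Fin b2 ⊕ Fin c2)) ℝ)
    (B2 : Matrix (Fin a2 ⊕ (Fin b2 ⊕ Fin c2)) (Fin m2) ℝ)
    (u2 y2 : ℝ → Fin m2 → ℝ)
    (hJ2 : J2ᵀ = -J2) (hR2 : R2.PosSemidef)
    (hE2 : ∀ x₁ x₂, E2ᵀ *ᵥ e2 x₁ x₂ = g22 x₁ x₂)
    (heq2 : ∀ t ∈ Set.Icc t₀ tf,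
      Sum.elim (g21 (x₁ t) (x₂ t)) (Sum.elim (E2 *ᵥ x₂' t) 0)
        = (J2 - R2) *ᵥ Sum.elim (x₁' t) (Sum.elim (e2 (x₁ t) (x₂ t)) (x₃ t))
          + B2 *ᵥ u2 t)
    (hy2 : ∀ t ∈ Set.Icc t₀ tf,
      y2 t = B2ᵀ *ᵥ Sum.elim (x₁' t) (Sum.elim (e2 (x₁ t) (x₂ t)) (x₃ t)))
    -- interconnection
    (Fskew Fsym : Matrix (Fin m1 ⊕ Fin m2) (Fin m1 ⊕ Fin m2) ℝ)
    (hFskew : Fskewᵀ = -Fskew) (hFsym : Fsym.PosSemidef)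
    (utilde1 : ℝ → Fin m1 → ℝ) (utilde2 : ℝ → Fin m2 → ℝ)
    (hcoupling : ∀ t ∈ Set.Icc t₀ tf,
      Sum.elim (u1 t) (u2 t)
        = (Fskew - Fsym) *ᵥ Sum.elim (y1 t) (y2 t) + Sum.elim (utilde1 t) (utilde2 t)) :
    -- block-assembled matrices of the coupled system
    ∀ (J R : Matrix ((Fin a1 ⊕ Fin a2) ⊕ ((Fin b1 ⊕ Fin b2) ⊕ (Fin c1 ⊕ Fin c2)))
        ((Fin a1 ⊕ Fin a2) ⊕ ((Fin b1 ⊕ Fin b2) ⊕ (Fin c1 ⊕ Fin c2))) ℝ)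
      (B : Matrix ((Fin a1 ⊕ Fin a2) ⊕ ((Fin b1 ⊕ Fin b2) ⊕ (Fin c1 ⊕ Fin c2)))
        (Fin m1 ⊕ Fin m2) ℝ)
      (E : Matrix (Fin b1 ⊕ Fin b2) (Fin b1 ⊕ Fin b2) ℝ),
    J = (Matrix.fromBlocks J1 0 0 J2).submatrix shuffle shuffle →
    R = (Matrix.fromBlocks R1 0 0 R2).submatrix shuffle shuffle →
    B = (Matrix.fromBlocks B1 0 0 B2).submatrix shuffle id →
    E = Matrix.fromBlocks E1 0 0 E2 →
    -- the coupled structure matrix is skew-symmetric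
    (J + B * Fskew * Bᵀ)ᵀ = -(J + B * Fskew * Bᵀ) ∧
    -- the coupled dissipation matrix is symmetric positive semi-definite
    (R + B * Fsym * Bᵀ).PosSemidef ∧
    -- the coupled effort condition, for H = H¹ + H²
    (∀ (p₁ : Fin a1 → ℝ) (p₂ : Fin b1 → ℝ) (q₁ : Fin a2 → ℝ) (q₂ : Fin b2 → ℝ),
      Eᵀ *ᵥ Sum.elim (e1 p₁ p₂) (e2 q₁ q₂) = Sum.elim (g12 p₁ p₂) (g22 q₁ q₂)) ∧
    -- the coupled system equation with input utilde
    (∀ t ∈ Set.Icc t₀ tf,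
      (Sum.elim (Sum.elim (g11 (w₁ t) (w₂ t)) (g21 (x₁ t) (x₂ t)))
          (Sum.elim (E *ᵥ Sum.elim (w₂' t) (x₂' t)) 0)
        = ((J + B * Fskew * Bᵀ) - (R + B * Fsym * Bᵀ)) *ᵥ
            Sum.elim (Sum.elim (w₁' t) (x₁' t))
              (Sum.elim (Sum.elim (e1 (w₁ t) (w₂ t)) (e2 (x₁ t) (x₂ t)))
                (Sum.elim (w₃ t) (x₃ t)))
          + B *ᵥ Sum.elim (utilde1 t) (utilde2 t)) ∧
      -- the coupled output equation
      Sum.elim (y1 t) (y2 t)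
        = Bᵀ *ᵥ Sum.elim (Sum.elim (w₁' t) (x₁' t))
            (Sum.elim (Sum.elim (e1 (w₁ t) (w₂ t)) (e2 (x₁ t) (x₂ t)))
              (Sum.elim (w₃ t) (x₃ t)))) := by
  rintro J R B E rfl rfl rfl rfl
  refine ⟨?_, ?_, ?_, fun t ht => ?_⟩
  · rw [transpose_add, transpose_submatrix_eq_neg (transpose_fromBlocks_zero_zero_eq_neg hJ1 hJ2),
      transpose_mul_mul_transpose_eq_neg _ hFskew, neg_add]
  · refine ((hR1.fromBlocks_zero_zero hR2).submatrix shuffle).add ?_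
    simpa only [conjTranspose_eq_transpose_of_trivial] using hFsym.mul_mul_conjTranspose_same _
  · intro p₁ p₂ q₁ q₂
    rw [fromBlocks_transpose, transpose_zero, transpose_zero, fromBlocks_zero_zero_mulVec_sumElim,
      hE1, hE2]
  set v₁ := Sum.elim (w₁' t) (Sum.elim (e1 (w₁ t) (w₂ t)) (w₃ t))
  set v₂ := Sum.elim (x₁' t) (Sum.elim (e2 (x₁ t) (x₂ t)) (x₃ t))
  have hy : ((fromBlocks B1 0 0 B2).submatrix shuffle id)ᵀ *ᵥ (Sum.elim v₁ v₂ ∘ shuffle) =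
      Sum.elim (y1 t) (y2 t) := by
    rw [transpose_submatrix, fromBlocks_transpose, transpose_zero, transpose_zero,
      submatrix_shuffle_mulVec_comp_shuffle, fromBlocks_zero_zero_mulVec_sumElim, hy1 t ht,
      hy2 t ht]
    rfl
  rw [← sumElim_comp_shuffle, ← hy]
  refine ⟨?_, rfl⟩
  calc _ = (fromBlocks (J1 - R1) 0 0 (J2 - R2) *ᵥ Sum.elim v₁ v₂
          + fromBlocks B1 0 0 B2 *ᵥ Sum.elim (u1 t) (u2 t)) ∘ shuffle := by
        rw [fromBlocks_zero_zero_mulVec_sumElim, fromBlocks_zero_zero_mulVec_sumElim,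
          fromBlocks_zero_zero_mulVec_sumElim, ← Sum.elim_add_add, ← heq1 t ht, ← heq2 t ht,
          ← Sum.elim_zero_zero, sumElim_comp_shuffle]
    _ = (fromBlocks J1 0 0 J2 - fromBlocks R1 0 0 R2).submatrix shuffle shuffle *ᵥ
          (Sum.elim v₁ v₂ ∘ shuffle)
          + (fromBlocks B1 0 0 B2).submatrix shuffle id *ᵥ Sum.elim (u1 t) (u2 t) := by
        rw [submatrix_shuffle_mulVec_comp_shuffle, fromBlocks_sub, sub_zero, sub_zero]
        rfl
    _ = _ := (sub_add_mul_mul_transpose_mulVec_add _ _ _ _ _ _ _ _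
        (by rw [hy]; exact hcoupling t ht)).symm

theorem stmt_4 {a1 b1 c1 a2 b2 c2 m1 m2 : ℕ}
    (t₀ tf : ℝ)
    -- subsystem 1
    (w₁ : ℝ → Fin a1 → ℝ) (w₂ : ℝ → Fin b1 → ℝ) (w₃ : ℝ → Fin c1 → ℝ)
    (w₁' : ℝ → Fin a1 → ℝ) (w₂' : ℝ → Fin b1 → ℝ)
    (H1 : (Fin a1 → ℝ) → (Fin b1 → ℝ) → ℝ)
    (g11 : (Fin a1 → ℝ) → (Fin b1 → ℝ) → Fin a1 → ℝ)
    (g12 : (Fin a1 → ℝ) → (Fin b1 → ℝ) → Fin b1 → ℝ)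
    (e1 : (Fin a1 → ℝ) → (Fin b1 → ℝ) → Fin b1 → ℝ)
    (E1 : Matrix (Fin b1) (Fin b1) ℝ)
    (J1 R1 : Matrix (Fin a1 ⊕ (Fin b1 ⊕ Fin c1)) (Fin a1 ⊕ (Fin b1 ⊕ Fin c1)) ℝ)
    (B1 : Matrix (Fin a1 ⊕ (Fin b1 ⊕ Fin c1)) (Fin m1) ℝ)
    (u1 y1 : ℝ → Fin m1 → ℝ)
    (hJ1 : J1ᵀ = -J1) (hR1 : R1.PosSemidef)
    (hE1 : ∀ x₁ x₂, E1ᵀ *ᵥ e1 x₁ x₂ = g12 x₁ x₂)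
    (heq1 : ∀ t ∈ Set.Icc t₀ tf,
      Sum.elim (g11 (w₁ t) (w₂ t)) (Sum.elim (E1 *ᵥ w₂' t) 0)
        = (J1 - R1) *ᵥ Sum.elim (w₁' t) (Sum.elim (e1 (w₁ t) (w₂ t)) (w₃ t))
          + B1 *ᵥ u1 t)
    (hy1 : ∀ t ∈ Set.Icc t₀ tf,
      y1 t = B1ᵀ *ᵥ Sum.elim (w₁' t) (Sum.elim (e1 (w₁ t) (w₂ t)) (w₃ t)))
    -- subsystem 2
    (x₁ : ℝ → Fin a2 → ℝ) (x₂ : ℝ → Fin b2 → ℝ) (x₃ : ℝ → Fin c2 → ℝ)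
    (x₁' : ℝ → Fin a2 → ℝ) (x₂' : ℝ → Fin b2 → ℝ)
    (H2 : (Fin a2 → ℝ) → (Fin b2 → ℝ) → ℝ)
    (g21 : (Fin a2 → ℝ) → (Fin b2 → ℝ) → Fin a2 → ℝ)
    (g22 : (Fin a2 → ℝ) → (Fin b2 → ℝ) → Fin b2 → ℝ)
    (e2 : (Fin a2 → ℝ) → (Fin b2 → ℝ) → Fin b2 → ℝ)
    (E2 : Matrix (Fin b2) (Fin b2) ℝ)
    (J2 R2 : Matrix (Fin a2 ⊕ (Fin b2 ⊕ Fin c2)) (Fin a2 ⊕ (Fin b2 ⊕ Fin c2)) ℝ)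
    (B2 : Matrix (Fin a2 ⊕ (Fin b2 ⊕ Fin c2)) (Fin m2) ℝ)
    (u2 y2 : ℝ → Fin m2 → ℝ)
    (hJ2 : J2ᵀ = -J2) (hR2 : R2.PosSemidef)
    (hE2 : ∀ x₁ x₂, E2ᵀ *ᵥ e2 x₁ x₂ = g22 x₁ x₂)
    (heq2 : ∀ t ∈ Set.Icc t₀ tf,
      Sum.elim (g21 (x₁ t) (x₂ t)) (Sum.elim (E2 *ᵥ x₂' t) 0)
        = (J2 - R2) *ᵥ Sum.elim (x₁' t) (Sum.elim (e2 (x₁ t) (x₂ t)) (x₃ t))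
          + B2 *ᵥ u2 t)
    (hy2 : ∀ t ∈ Set.Icc t₀ tf,
      y2 t = B2ᵀ *ᵥ Sum.elim (x₁' t) (Sum.elim (e2 (x₁ t) (x₂ t)) (x₃ t)))
    -- interconnection
    (Fskew Fsym : Matrix (Fin m1 ⊕ Fin m2) (Fin m1 ⊕ Fin m2) ℝ)
    (hFskew : Fskewᵀ = -Fskew) (hFsym : Fsym.PosSemidef)
    (utilde1 : ℝ → Fin m1 → ℝ) (utilde2 : ℝ → Fin m2 → ℝ)
    (hcoupling : ∀ t ∈ Set.Icc t₀ tf,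
      Sum.elim (u1 t) (u2 t)
        = (Fskew - Fsym) *ᵥ Sum.elim (y1 t) (y2 t) + Sum.elim (utilde1 t) (utilde2 t)) :
    -- block-assembled matrices of the coupled system
    ∀ (J R : Matrix ((Fin a1 ⊕ Fin a2) ⊕ ((Fin b1 ⊕ Fin b2) ⊕ (Fin c1 ⊕ Fin c2)))
        ((Fin a1 ⊕ Fin a2) ⊕ ((Fin b1 ⊕ Fin b2) ⊕ (Fin c1 ⊕ Fin c2))) ℝ)
      (B : Matrix ((Fin a1 ⊕ Fin a2) ⊕ ((Fin b1 ⊕ Fin b2) ⊕ (Fin c1 ⊕ Fin c2)))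
        (Fin m1 ⊕ Fin m2) ℝ)
      (E : Matrix (Fin b1 ⊕ Fin b2) (Fin b1 ⊕ Fin b2) ℝ),
    J = (Matrix.fromBlocks J1 0 0 J2).submatrix shuffle shuffle →
    R = (Matrix.fromBlocks R1 0 0 R2).submatrix shuffle shuffle →
    B = (Matrix.fromBlocks B1 0 0 B2).submatrix shuffle id →
    E = Matrix.fromBlocks E1 0 0 E2 →
    -- the coupled structure matrix is skew-symmetric
    (J + B * Fskew * Bᵀ)ᵀ = -(J + B * Fskew * Bᵀ) ∧
    -- the coupled dissipation matrix is symmetric positive semi-definite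
    (R + B * Fsym * Bᵀ).PosSemidef ∧
    -- the coupled effort condition, for H = H¹ + H²
    (∀ (p₁ : Fin a1 → ℝ) (p₂ : Fin b1 → ℝ) (q₁ : Fin a2 → ℝ) (q₂ : Fin b2 → ℝ),
      Eᵀ *ᵥ Sum.elim (e1 p₁ p₂) (e2 q₁ q₂) = Sum.elim (g12 p₁ p₂) (g22 q₁ q₂)) ∧
    -- the coupled system equation with input utilde
    (∀ t ∈ Set.Icc t₀ tf,
      (Sum.elim (Sum.elim (g11 (w₁ t) (w₂ t)) (g21 (x₁ t) (x₂ t)))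
          (Sum.elim (E *ᵥ Sum.elim (w₂' t) (x₂' t)) 0)
        = ((J + B * Fskew * Bᵀ) - (R + B * Fsym * Bᵀ)) *ᵥ
            Sum.elim (Sum.elim (w₁' t) (x₁' t))
              (Sum.elim (Sum.elim (e1 (w₁ t) (w₂ t)) (e2 (x₁ t) (x₂ t)))
                (Sum.elim (w₃ t) (x₃ t)))
          + B *ᵥ Sum.elim (utilde1 t) (utilde2 t)) ∧
      -- the coupled output equation
      Sum.elim (y1 t) (y2 t)
        = Bᵀ *ᵥ Sum.elim (Sum.elim (w₁' t) (x₁' t))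
            (Sum.elim (Sum.elim (e1 (w₁ t) (w₂ t)) (e2 (x₁ t) (x₂ t)))
              (Sum.elim (w₃ t) (x₃ t)))) :=
  stmt_4_general t₀ tf w₁ w₂ w₃ w₁' w₂' g11 g12 e1 E1 J1 R1 B1 u1 y1 hJ1 hR1 hE1 heq1 hy1 x₁ x₂ x₃
    x₁' x₂' g21 g22 e2 E2 J2 R2 B2 u2 y2 hJ2 hR2 hE2 heq2 hy2 Fskew Fsym hFskew hFsym utilde1
    utilde2 hcoupling
end

section
/- Discrete energy dissipation of the implicit midpoint rule: Let H(z₁,z₂) = ½⟨z₁, M₁z₁⟩ + ½⟨z₂, M₂z₂⟩ with M₁, M₂ symmetric, and suppose the discrete iterates satisfy [τ∇_{z₁}H^{k+1/2}; E(z₂^{k+1}-z₂^k); 0] = (J - R)[z₁^{k+1}-z₁^k; τe^{k+1/2}; τz₃^{k+1/2}] + τBu^{k+1/2} and τy^{k+1/2} = Bᵀ[z₁^{k+1}-z₁^k; τe^{k+1/2}; τz₃^{k+1/2}], where e^{k+1/2} = e(z₁^{k+1/2}, z₂^{k+1/2}) satisfies Eᵀe^{k+1/2} = ∇_{z₂}H(z₁^{k+1/2},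 z₂^{k+1/2}), x^{k+1/2} := (x^k + x^{k+1})/2, J skew-symmetric, R symmetric positive semi-definite, τ > 0. Then H^{k+1} - H^k ≤ τ⟨y^{k+1/2}, u^{k+1/2}⟩; in particular H^{k+1} ≤ H^k when u^{k+1/2} = 0. -/
/-!
Pairing the midpoint equation with the flow vector `Δ = [z₁^{k+1} - z₁^k; τ e; τ z₃]` gives a
discrete power balance. For a quadratic Hamiltonian the midpoint gradient is exact:
`H(z^{k+1}) - H(z^k) = ⟨z^{k+1} - z^k, ∇H(z^{k+1/2})⟩`, so the left side is `τ (H^{k+1} - H^k)`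
(the `z₂`-block via `Eᵀ e = ∇_{z₂} H`, the algebraic block contributing nothing). On the right,
`⟨Δ, J Δ⟩ = 0`, `⟨Δ, R Δ⟩ ≥ 0` and `⟨Δ, τ B u⟩ = τ ⟨Bᵀ Δ, u⟩ = τ² ⟨y, u⟩`; divide by `τ > 0`.
-/

open Matrix

namespace Matrix

variable {ι κ : Type*} [Fintype ι] [Fintype κ]

theorem half_quadForm_sub_eq_dotProduct_mulVec_midpoint {K : Type*} [Field K]
    {M : Matrix ι ι K} (hM : Mᵀ = M) (a b : ι → K) :
    (1 / 2) * (b ⬝ᵥ M *ᵥ b) - (1 / 2) * (a ⬝ᵥ M *ᵥ a)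
      = (b - a) ⬝ᵥ M *ᵥ ((1 / 2 : K) • (a + b)) := by
  have hab : a ⬝ᵥ M *ᵥ b = b ⬝ᵥ M *ᵥ a := by rw [← dotProduct_transpose_mulVec, hM]
  simp only [mulVec_smul, mulVec_add, dotProduct_smul, dotProduct_add, sub_dotProduct,
    smul_eq_mul]
  linear_combination (1 / 2 : K) * hab

theorem dotProduct_mulVec_self_eq_zero_of_transpose_eq_neg_s6 {K : Type*} [CommRing K]
    [NoZeroDivisors K] [CharZero K] {J : Matrix ι ι K} (hJ : Jᵀ = -J) (v : ι → K) :
    v ⬝ᵥ J *ᵥ v = 0 := by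
  have h := dotProduct_transpose_mulVec J v v
  rw [hJ, neg_mulVec, dotProduct_neg] at h
  exact neg_eq_self.mp h

theorem dotProduct_le_of_eq_sub_mulVec_add {𝕜 : Type*} [Field 𝕜] [LinearOrder 𝕜]
    [IsStrictOrderedRing 𝕜] [StarRing 𝕜] [TrivialStar 𝕜]
    {J R : Matrix ι ι 𝕜} {B : Matrix ι κ 𝕜} (hJ : Jᵀ = -J) (hR : R.PosSemidef)
    {w f : ι → 𝕜} {u : κ → 𝕜} (hf : f = (J - R) *ᵥ w + B *ᵥ u) :
    w ⬝ᵥ f ≤ (Bᵀ *ᵥ w) ⬝ᵥ u := by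
  have hskew := dotProduct_mulVec_self_eq_zero_of_transpose_eq_neg_s6 hJ w
  have hdiss : 0 ≤ w ⬝ᵥ R *ᵥ w := by simpa using hR.dotProduct_mulVec_nonneg w
  have hsupply : w ⬝ᵥ B *ᵥ u = (Bᵀ *ᵥ w) ⬝ᵥ u := by
    rw [dotProduct_comm (Bᵀ *ᵥ w), dotProduct_transpose_mulVec]
  rw [hf, sub_mulVec, dotProduct_add, dotProduct_sub, hskew, hsupply]
  linarith

end Matrix

theorem stmt_6 {n₁ n₂ n₃ m : ℕ}
    (M₁ : Matrix (Fin n₁) (Fin n₁) ℝ) (M₂ : Matrix (Fin n₂) (Fin n₂) ℝ)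
    (hM₁ : M₁ᵀ = M₁) (hM₂ : M₂ᵀ = M₂)
    (H : (Fin n₁ → ℝ) → (Fin n₂ → ℝ) → ℝ)
    (hH : ∀ x₁ x₂, H x₁ x₂ = (1 / 2) * (x₁ ⬝ᵥ M₁ *ᵥ x₁) + (1 / 2) * (x₂ ⬝ᵥ M₂ *ᵥ x₂))
    (E : Matrix (Fin n₂) (Fin n₂) ℝ)
    (J R : Matrix (Fin n₁ ⊕ (Fin n₂ ⊕ Fin n₃)) (Fin n₁ ⊕ (Fin n₂ ⊕ Fin n₃)) ℝ)
    (B : Matrix (Fin n₁ ⊕ (Fin n₂ ⊕ Fin n₃)) (Fin m) ℝ)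
    (hJ : Jᵀ = -J) (hR : R.PosSemidef)
    (τ : ℝ) (hτ : 0 < τ)
    (z₁k z₁k1 : Fin n₁ → ℝ) (z₂k z₂k1 : Fin n₂ → ℝ) (z₃mid : Fin n₃ → ℝ)
    (emid : Fin n₂ → ℝ) (umid ymid : Fin m → ℝ)
    -- the effort condition at the midpoint:  Eᵀ e^{k+1/2} = ∇_{z₂}H(z^{k+1/2})
    (hE : Eᵀ *ᵥ emid = M₂ *ᵥ ((1 / 2 : ℝ) • (z₂k + z₂k1)))
    -- the implicit midpoint iteration
    (heq :
      Sum.elim (τ • (M₁ *ᵥ ((1 / 2 : ℝ) • (z₁k + z₁k1))))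
        (Sum.elim (E *ᵥ (z₂k1 - z₂k)) 0)
        = (J - R) *ᵥ Sum.elim (z₁k1 - z₁k) (Sum.elim (τ • emid) (τ • z₃mid))
          + τ • (B *ᵥ umid))
    -- the discrete output equation
    (hy : τ • ymid
        = Bᵀ *ᵥ Sum.elim (z₁k1 - z₁k) (Sum.elim (τ • emid) (τ • z₃mid))) :
    H z₁k1 z₂k1 - H z₁k z₂k ≤ τ * (ymid ⬝ᵥ umid) ∧
    (umid = 0 → H z₁k1 z₂k1 ≤ H z₁k z₂k) := by
  set Δ := Sum.elim (z₁k1 - z₁k) (Sum.elim (τ • emid) (τ • z₃mid)) with hΔ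
  have hbalance := dotProduct_le_of_eq_sub_mulVec_add (B := B) (w := Δ) (u := τ • umid) hJ hR
    (heq.trans (by rw [mulVec_smul]))
  have henergy : H z₁k1 z₂k1 - H z₁k z₂k
      = (z₁k1 - z₁k) ⬝ᵥ M₁ *ᵥ ((1 / 2 : ℝ) • (z₁k + z₁k1))
        + (z₂k1 - z₂k) ⬝ᵥ M₂ *ᵥ ((1 / 2 : ℝ) • (z₂k + z₂k1)) := by
    rw [← half_quadForm_sub_eq_dotProduct_mulVec_midpoint hM₁,
      ← half_quadForm_sub_eq_dotProduct_mulVec_midpoint hM₂, hH, hH]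
    ring
  have hpower : Δ ⬝ᵥ Sum.elim (τ • (M₁ *ᵥ ((1 / 2 : ℝ) • (z₁k + z₁k1))))
      (Sum.elim (E *ᵥ (z₂k1 - z₂k)) 0) = τ * (H z₁k1 z₂k1 - H z₁k z₂k) := by
    rw [henergy, hΔ, sumElim_dotProduct_sumElim, sumElim_dotProduct_sumElim, smul_dotProduct,
      ← dotProduct_transpose_mulVec, hE]
    simp only [dotProduct_smul, dotProduct_zero, smul_eq_mul]
    ring
  have hsupply : (Bᵀ *ᵥ Δ) ⬝ᵥ (τ • umid) = τ * (τ * (ymid ⬝ᵥ umid)) := by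
    rw [← hy, smul_dotProduct, dotProduct_smul, smul_eq_mul, smul_eq_mul]
  have hmain : H z₁k1 z₂k1 - H z₁k z₂k ≤ τ * (ymid ⬝ᵥ umid) :=
    le_of_mul_le_mul_left (hpower ▸ hbalance.trans_eq hsupply) hτ
  refine ⟨hmain, fun hu => ?_⟩
  simpa [hu] using hmain
end

section
/- The dissipation matrix of the foil conductor model, ℛ = [M_σ, -X_foil, 0; -X_foilᵀ, G_foil, 0; 0, 0, 0] with G_foil = X_foilᵀ M_σ⁺ X_foil, is symmetric positive semi-definite, provided M_σ is symmetric positive semi-definite and the column space of X_foil is contained in the column space of M_σ. -/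
open Matrix

/-- `P` satisfies the four Moore–Penrose conditions for `M`. -/
def IsMoorePenroseInv {n : ℕ} (M P : Matrix (Fin n) (Fin n) ℝ) : Prop :=
  M * P * M = M ∧ P * M * P = P ∧ (M * P)ᵀ = M * P ∧ (P * M)ᵀ = P * M

/-!
Writing `C = [1, -P X]`, the upper-left block of `ℛ` is the congruence `Cᴴ M C`: the off-diagonal
blocks reduce to `-X` because `M P X = X`, which holds since `M P M = M` and every column of `X`
lies in the column space of `M`. A congruence of a positive semidefinite matrix is positive
semidefinite, and padding with a zero block (the congruence by `[1, 0]`) keeps it so.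
-/

namespace Matrix

variable {m n R : Type*} [Fintype m] [CommRing R]

theorem mul_mul_eq_self_of_mulVec_eq {M P : Matrix m m R} {X : Matrix m n R}
    (hMPM : M * P * M = M) (hX : ∀ j, ∃ x, M *ᵥ x = fun i => X i j) : M * P * X = X := by
  choose x hx using hX
  have hMY : M * (of fun i j => x j i) = X := by
    ext i j
    simpa [mul_apply, mulVec, dotProduct] using congrFun (hx j) i
  rw [← hMY, ← Matrix.mul_assoc, hMPM]

variable [Fintype n] [PartialOrder R] [StarRing R]

theorem PosSemidef.fromBlocks_zero_zero_zero [DecidableEq m] {A : Matrix m m R}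
    (hA : A.PosSemidef) :
    (fromBlocks A 0 0 0 : Matrix (m ⊕ n) (m ⊕ n) R).PosSemidef := by
  have h := hA.conjTranspose_mul_mul_same (fromCols 1 0 : Matrix m (m ⊕ n) R)
  rw [conjTranspose_fromCols_eq_fromRows_conjTranspose, fromRows_mul, fromRows_mul_fromCols] at h
  simpa using h

theorem PosSemidef.fromBlocks_neg_of_mul_mul_eq [DecidableEq m] {M P : Matrix m m R}
    {X : Matrix m n R} (hM : M.PosSemidef) (hX : M * P * X = X) :
    (fromBlocks M (-X) (-Xᴴ) (Xᴴ * P * X)).PosSemidef := by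
  have hXPM : Xᴴ * Pᴴ * M = Xᴴ := by
    conv_rhs => rw [← hX]
    rw [conjTranspose_mul, conjTranspose_mul, hM.isHermitian.eq, Matrix.mul_assoc]
  have h := hM.conjTranspose_mul_mul_same (fromCols (1 : Matrix m m R) (-(P * X)))
  rw [conjTranspose_fromCols_eq_fromRows_conjTranspose, fromRows_mul, fromRows_mul_fromCols,
    conjTranspose_neg, conjTranspose_mul, conjTranspose_one] at h
  simpa only [Matrix.one_mul, Matrix.mul_one, Matrix.mul_neg, Matrix.neg_mul, neg_neg,
    ← Matrix.mul_assoc, hX, hXPM] using h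

end Matrix

theorem stmt_10_general {nw np n₃ : ℕ}
    (Mσ P : Matrix (Fin nw) (Fin nw) ℝ)
    (Xfoil : Matrix (Fin nw) (Fin np) ℝ)
    (hM : Mσ.PosSemidef) (hP : IsMoorePenroseInv Mσ P)
    (hcol : ∀ j, ∃ x : Fin nw → ℝ, Mσ *ᵥ x = fun i => Xfoil i j)
    (Gfoil : Matrix (Fin np) (Fin np) ℝ) (hG : Gfoil = Xfoilᵀ * P * Xfoil) :
    (Matrix.fromBlocks
      (Matrix.fromBlocks Mσ (-Xfoil) (-Xfoilᵀ) Gfoil)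
      (0 : Matrix (Fin nw ⊕ Fin np) (Fin n₃) ℝ)
      (0 : Matrix (Fin n₃) (Fin nw ⊕ Fin np) ℝ)
      (0 : Matrix (Fin n₃) (Fin n₃) ℝ)).PosSemidef := by
  obtain ⟨hMPM, -, -, -⟩ := hP
  have hMPX : Mσ * P * Xfoil = Xfoil := mul_mul_eq_self_of_mulVec_eq hMPM hcol
  have h := (hM.fromBlocks_neg_of_mul_mul_eq hMPX).fromBlocks_zero_zero_zero (n := Fin n₃)
  rwa [conjTranspose_eq_transpose_of_trivial, ← hG] at h

theorem stmt_10 {nw np n₃ : ℕ} (hn₃ : 1 ≤ n₃)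
    (Mσ P : Matrix (Fin nw) (Fin nw) ℝ)
    (Xfoil : Matrix (Fin nw) (Fin np) ℝ)
    (hM : Mσ.PosSemidef) (hP : IsMoorePenroseInv Mσ P)
    (hcol : ∀ j, ∃ x : Fin nw → ℝ, Mσ *ᵥ x = fun i => Xfoil i j)
    (Gfoil : Matrix (Fin np) (Fin np) ℝ) (hG : Gfoil = Xfoilᵀ * P * Xfoil) :
    (Matrix.fromBlocks
      (Matrix.fromBlocks Mσ (-Xfoil) (-Xfoilᵀ) Gfoil)
      (0 : Matrix (Fin nw ⊕ Fin np) (Fin n₃) ℝ)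
      (0 : Matrix (Fin n₃) (Fin nw ⊕ Fin np) ℝ)
      (0 : Matrix (Fin n₃) (Fin n₃) ℝ)).PosSemidef :=
  stmt_10_general Mσ P Xfoil hM hP hcol Gfoil hG
end

section
/- Power balance of the solid conductor model: if M_σ is symmetric positive semi-definite and (a, v_sol) solves M_σȧ + K_νa - M_σX_sol v_sol = 0 and -X_solᵀM_σᵀȧ + G_sol v_sol - ı_sol = 0 with G_sol = X_solᵀ M_σ X_sol, then for H(a) = ½aᵀK_νa one has d/dt H(a) = -(ȧ - X_sol v_sol)ᵀ M_σ (ȧ - X_sol v_sol) + ı_solᵀ v_sol ≤ ı_solᵀ v_sol. -/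
/-!
Write `ȧ` for the derivative of `a` and `w := X v - ȧ`. The first equation says `K a = M w` and,
`M` being symmetric, the second says `ı = Xᵀ M w`. Since `K` is symmetric, `d/dt H(a) = ȧᵀ K a`,
which therefore equals `ȧᵀ M w`; splitting `ȧ = X v - w` gives `ȧᵀ M w = -wᵀ M w + ıᵀ v`, and
the dissipated power `wᵀ M w` is nonnegative because `M` is positive semi-definite.
-/

open Matrix

section QuadraticForm

variable {n : Type*} [Fintype n]

theorem dotProduct_mulVec_comm_of_transpose_eq {R : Type*} [CommSemiring R] {A : Matrix n n R}
    (hA : Aᵀ = A) (x y : n → R) : x ⬝ᵥ A *ᵥ y = y ⬝ᵥ A *ᵥ x := by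
  rw [dotProduct_mulVec, ← mulVec_transpose, hA, dotProduct_comm]

theorem hasDerivAt_dotProduct_mulVec_self (A : Matrix n n ℝ) {a : ℝ → n → ℝ} {a' : n → ℝ}
    {t : ℝ} (ha : ∀ i, HasDerivAt (fun s => a s i) (a' i) t) :
    HasDerivAt (fun s => a s ⬝ᵥ A *ᵥ a s) (a' ⬝ᵥ A *ᵥ a t + a t ⬝ᵥ A *ᵥ a') t := by
  have h : HasDerivAt (fun s => ∑ i, a s i * ∑ j, A i j * a s j)
      (∑ i, (a' i * ∑ j, A i j * a t j + a t i * ∑ j, A i j * a' j)) t :=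
    HasDerivAt.fun_sum fun i _ =>
      (ha i).mul (HasDerivAt.fun_sum fun j _ => (ha j).const_mul _)
  simpa only [dotProduct, mulVec, Finset.sum_add_distrib] using h

theorem hasDerivAt_half_dotProduct_mulVec_self {A : Matrix n n ℝ} (hA : Aᵀ = A)
    {a : ℝ → n → ℝ} {a' : n → ℝ} {t : ℝ} (ha : ∀ i, HasDerivAt (fun s => a s i) (a' i) t) :
    HasDerivAt (fun s => 1 / 2 * (a s ⬝ᵥ A *ᵥ a s)) (a' ⬝ᵥ A *ᵥ a t) t := by
  refine ((hasDerivAt_dotProduct_mulVec_self A ha).const_mul (1 / 2 : ℝ)).congr_deriv ?_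
  rw [dotProduct_mulVec_comm_of_transpose_eq hA (a t) a']
  ring

end QuadraticForm

theorem solidConductor_power_eq {m n R : Type*} [Fintype m] [Fintype n] [CommRing R]
    {K M : Matrix m m R} {X : Matrix m n R} (hM : Mᵀ = M) {a a' : m → R} {v i : n → R}
    (h₁ : M *ᵥ a' + K *ᵥ a - (M * X) *ᵥ v = 0)
    (h₂ : -((Xᵀ * Mᵀ) *ᵥ a') + (Xᵀ * M * X) *ᵥ v - i = 0) :
    a' ⬝ᵥ K *ᵥ a = -((a' - X *ᵥ v) ⬝ᵥ M *ᵥ (a' - X *ᵥ v)) + i ⬝ᵥ v := by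
  set w := X *ᵥ v - a'
  have hKa : K *ᵥ a = M *ᵥ w := by
    rw [mulVec_sub]
    rw [← mulVec_mulVec] at h₁
    linear_combination h₁
  have hi : i = Xᵀ *ᵥ (M *ᵥ w) := by
    rw [mulVec_sub, mulVec_sub]
    rw [hM, ← mulVec_mulVec, ← mulVec_mulVec, ← mulVec_mulVec] at h₂
    linear_combination -h₂
  have hiv : i ⬝ᵥ v = X *ᵥ v ⬝ᵥ M *ᵥ w := by
    rw [hi, mulVec_transpose, ← dotProduct_mulVec, dotProduct_comm]
  have ha' : a' - X *ᵥ v = -w := (neg_sub _ _).symm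
  rw [hKa, hiv, ha', mulVec_neg, neg_dotProduct, dotProduct_neg, neg_neg, neg_add_eq_sub,
    ← sub_dotProduct, sub_sub_cancel]

theorem stmt_12 {nw nsol : ℕ}
    (Kν Mσ : Matrix (Fin nw) (Fin nw) ℝ)
    (Xsol : Matrix (Fin nw) (Fin nsol) ℝ)
    (hK : Kνᵀ = Kν) (hM : Mσ.PosSemidef)
    (Gsol : Matrix (Fin nsol) (Fin nsol) ℝ) (hG : Gsol = Xsolᵀ * Mσ * Xsol)
    (t₀ tf : ℝ)
    (a a' : ℝ → Fin nw → ℝ) (vsol icursol : ℝ → Fin nsol → ℝ)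
    (ha : ∀ t ∈ Set.Icc t₀ tf, ∀ i, HasDerivAt (fun s => a s i) (a' t i) t)
    (heq1 : ∀ t ∈ Set.Icc t₀ tf,
      Mσ *ᵥ a' t + Kν *ᵥ a t - (Mσ * Xsol) *ᵥ vsol t = 0)
    (heq2 : ∀ t ∈ Set.Icc t₀ tf,
      -((Xsolᵀ * Mσᵀ) *ᵥ a' t) + Gsol *ᵥ vsol t - icursol t = 0) :
    ∀ t ∈ Set.Icc t₀ tf,
      HasDerivAt (fun s => (1 / 2) * (a s ⬝ᵥ Kν *ᵥ a s))
        (-((a' t - Xsol *ᵥ vsol t) ⬝ᵥ Mσ *ᵥ (a' t - Xsol *ᵥ vsol t))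
          + icursol t ⬝ᵥ vsol t) t ∧
      -((a' t - Xsol *ᵥ vsol t) ⬝ᵥ Mσ *ᵥ (a' t - Xsol *ᵥ vsol t)) + icursol t ⬝ᵥ vsol t
        ≤ icursol t ⬝ᵥ vsol t := by
  intro t ht
  subst hG
  have hMσ : Mσᵀ = Mσ := by simpa using hM.isHermitian.eq
  have hdissipation : 0 ≤ (a' t - Xsol *ᵥ vsol t) ⬝ᵥ Mσ *ᵥ (a' t - Xsol *ᵥ vsol t) := by
    simpa only [star_trivial] using hM.dotProduct_mulVec_nonneg (a' t - Xsol *ᵥ vsol t)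
  have hpower := solidConductor_power_eq hMσ (heq1 t ht) (heq2 t ht)
  rw [← hpower]
  exact ⟨hasDerivAt_half_dotProduct_mulVec_self hK (ha t ht), by linarith⟩
end

section
/- The MNA system fits the generalized energy-based structure: with z₂ = (φ, ȷ_L), z₃ = ȷ_V, E = diag(A_C C A_Cᵀ, L), effort e(z₂) = z₂, Hamiltonian H(z₂) = ½φᵀA_C C A_Cᵀφ + ½ȷ_LᵀLȷ_L, J = [0, -A_L, -A_V; A_Lᵀ, 0, 0; A_Vᵀ, 0, 0], R = diag(A_R G A_Rᵀ, 0, 0), and B = -[A_I, 0; 0, 0; 0, I], the identities Eᵀe(z₂) = ∇_{z₂}H(z₂), Jᵀ = -J, R = Rᵀ ≥ 0 hold, and the MNA equations A_C C A_Cᵀ φ̇ + A_R G A_Rᵀ φ + A_L ȷ_L + A_V ȷ_V + A_I ı = 0, L ȷ̇_L - A_Lᵀ φ = 0, A_Vᵀφ - v = 0 are equivalent to [∇_{z₁}H; Eż₂; 0] = (J-R)[·; e(z₂); z₃] + Bu with u = (ı, v) (and empty z₁). -/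
/-! Everything is block-matrix bookkeeping. `E` is symmetric because `C` and `L` are; `J` is
skew because each off-diagonal block is minus the transpose of its mirror; padding a positive
semidefinite block by zeros is the congruence by the inclusion `[1; 0]`, so `R` is positive
semidefinite; and `(J - R) z + B u`, read block by block, is the three MNA equations. -/

open Matrix

theorem Matrix.PosSemidef.fromBlocks_zero {m n R : Type*} [Fintype m] [Fintype n]
    [DecidableEq m] [Ring R] [PartialOrder R] [StarRing R]
    {A : Matrix m m R} (hA : A.PosSemidef) :
    (fromBlocks A 0 0 (0 : Matrix n n R)).PosSemidef := by
  set P : Matrix (m ⊕ n) m R := fromRows 1 0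
  have hP : fromBlocks A 0 0 (0 : Matrix n n R) = P * A * Pᴴ := by
    rw [conjTranspose_fromRows_eq_fromCols_conjTranspose, fromRows_mul, fromRows_mul_fromCols]
    simp
  exact hP ▸ hA.mul_mul_conjTranspose_same P

theorem Matrix.IsSymm.mul_mul_transpose {m n α : Type*} [Fintype n] [CommSemiring α]
    {C : Matrix n n α} (hC : C.IsSymm) (A : Matrix m n α) :
    (A * C * Aᵀ).IsSymm := by
  rw [IsSymm, transpose_mul, transpose_mul, transpose_transpose, hC.eq, Matrix.mul_assoc]

theorem Matrix.transpose_fromBlocks_neg_transpose {m n α : Type*} [InvolutiveNeg α]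
    {A : Matrix m m α} {B : Matrix m n α} {D : Matrix n n α}
    (hA : Aᵀ = -A) (hD : Dᵀ = -D) :
    (fromBlocks A (-B) Bᵀ D)ᵀ = -fromBlocks A (-B) Bᵀ D := by
  rw [fromBlocks_transpose, fromBlocks_neg, hA, hD, transpose_neg, transpose_transpose, neg_neg]

theorem transpose_mna_interconnection {n l v α : Type*} [AddGroup α]
    (AL : Matrix n l α) (AV : Matrix n v α) :
    (fromBlocks (fromBlocks 0 (-AL) ALᵀ 0) (fromRows (-AV) 0) (fromCols AVᵀ 0) 0)ᵀ
      = -fromBlocks (fromBlocks 0 (-AL) ALᵀ 0) (fromRows (-AV) 0) (fromCols AVᵀ 0) 0 := by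
  have hneg : fromRows (-AV) (0 : Matrix l v α) = -fromRows AV 0 := by
    rw [fromRows_neg, neg_zero]
  have htr : fromCols AVᵀ (0 : Matrix v l α) = (fromRows AV 0)ᵀ := by
    rw [transpose_fromRows, transpose_zero]
  rw [hneg, htr]
  exact transpose_fromBlocks_neg_transpose
    (transpose_fromBlocks_neg_transpose (by simp) (by simp)) (by simp)

theorem mna_rhs_eq_sumElim {n l v i α : Type*} [Fintype n] [Fintype l] [Fintype v] [Fintype i]
    [DecidableEq v] [CommRing α] (N : Matrix n n α) (AL : Matrix n l α) (AV : Matrix n v α)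
    (AI : Matrix n i α) (φ : n → α) (jL : l → α) (jV : v → α) (icur : i → α) (u : v → α) :
    (fromBlocks (fromBlocks 0 (-AL) ALᵀ 0) (fromRows (-AV) 0) (fromCols AVᵀ 0) 0
        - fromBlocks (fromBlocks N 0 0 0) 0 0 0) *ᵥ Sum.elim (Sum.elim φ jL) jV
      + -(fromBlocks (fromRows AI (0 : Matrix l i α)) 0 0 1) *ᵥ Sum.elim icur u
      = Sum.elim (Sum.elim (-(N *ᵥ φ + AL *ᵥ jL + AV *ᵥ jV + AI *ᵥ icur)) (ALᵀ *ᵥ φ))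
          (AVᵀ *ᵥ φ - u) := by
  ext ((k | k) | k) <;>
    simp [sub_mulVec, neg_mulVec, fromBlocks_mulVec, fromRows_mulVec] <;>
    ring

theorem stmt_13 {nφ bC bR bL bV bI : ℕ}
    (AC : Matrix (Fin nφ) (Fin bC) ℝ) (AR : Matrix (Fin nφ) (Fin bR) ℝ)
    (AL : Matrix (Fin nφ) (Fin bL) ℝ) (AV : Matrix (Fin nφ) (Fin bV) ℝ)
    (AI : Matrix (Fin nφ) (Fin bI) ℝ)
    (C : Matrix (Fin bC) (Fin bC) ℝ) (G : Matrix (Fin bR) (Fin bR) ℝ)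
    (L : Matrix (Fin bL) (Fin bL) ℝ)
    (hC : C.PosDef) (hG : G.PosDef) (hL : L.PosDef)
    -- the energy-based structure matrices of the MNA model
    (E : Matrix (Fin nφ ⊕ Fin bL) (Fin nφ ⊕ Fin bL) ℝ)
    (hE : E = Matrix.fromBlocks (AC * C * ACᵀ) 0 0 L)
    (J R : Matrix ((Fin nφ ⊕ Fin bL) ⊕ Fin bV) ((Fin nφ ⊕ Fin bL) ⊕ Fin bV) ℝ)
    (hJ : J = Matrix.fromBlocks
      (Matrix.fromBlocks 0 (-AL) ALᵀ 0) (Matrix.fromRows (-AV) 0)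
      (Matrix.fromCols AVᵀ 0) 0)
    (hR : R = Matrix.fromBlocks
      (Matrix.fromBlocks (AR * G * ARᵀ) 0 0 0) 0 0 0)
    (B : Matrix ((Fin nφ ⊕ Fin bL) ⊕ Fin bV) (Fin bI ⊕ Fin bV) ℝ)
    (hB : B = -(Matrix.fromBlocks (Matrix.fromRows AI 0) 0 0 1)) :
    -- the effort condition  Eᵀ e(z₂) = ∇_{z₂}H(z₂)  with  e(z₂) = z₂
    (∀ (φ : Fin nφ → ℝ) (jL : Fin bL → ℝ),
      Eᵀ *ᵥ Sum.elim φ jL = Sum.elim ((AC * C * ACᵀ) *ᵥ φ) (L *ᵥ jL)) ∧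
    -- structure properties
    Jᵀ = -J ∧ R.PosSemidef ∧
    -- equivalence of the MNA equations with the energy-based form (empty z₁)
    (∀ (φ φ' : Fin nφ → ℝ) (jL jL' : Fin bL → ℝ) (jV : Fin bV → ℝ)
        (icur : Fin bI → ℝ) (v : Fin bV → ℝ),
      ((AC * C * ACᵀ) *ᵥ φ' + (AR * G * ARᵀ) *ᵥ φ + AL *ᵥ jL
          + AV *ᵥ jV + AI *ᵥ icur = 0 ∧
        L *ᵥ jL' - ALᵀ *ᵥ φ = 0 ∧
        AVᵀ *ᵥ φ - v = 0)
      ↔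
      Sum.elim (E *ᵥ Sum.elim φ' jL') 0
        = (J - R) *ᵥ Sum.elim (Sum.elim φ jL) jV + B *ᵥ Sum.elim icur v) := by
  have hEsymm : Eᵀ = E := hE ▸
    IsSymm.fromBlocks ((isHermitian_iff_isSymm.mp hC.1).mul_mul_transpose AC) transpose_zero
      (isHermitian_iff_isSymm.mp hL.1)
  have hRpsd : (AR * G * ARᵀ).PosSemidef := by
    simpa using hG.posSemidef.mul_mul_conjTranspose_same AR
  refine ⟨fun φ jL => ?_, hJ ▸ transpose_mna_interconnection AL AV,
    hR ▸ hRpsd.fromBlocks_zero.fromBlocks_zero, fun φ φ' jL jL' jV icur v => ?_⟩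
  · rw [hEsymm, hE]
    simp [fromBlocks_mulVec]
  · rw [hJ, hR, hB, mna_rhs_eq_sumElim, hE]
    simp only [fromBlocks_mulVec, Sum.elim_comp_inl, Sum.elim_comp_inr, zero_mulVec, add_zero,
      zero_add]
    rw [Sum.elim_eq_iff, Sum.elim_eq_iff, eq_neg_iff_add_eq_zero, sub_eq_zero, sub_eq_zero,
      eq_comm (a := (0 : Fin bV → ℝ)), sub_eq_zero, and_assoc]
    simp only [add_assoc]
end

section
/- Energy dissipation of the linear MNA model: if φ, ȷ_L, ȷ_V satisfy A_C C A_Cᵀ φ̇ + A_R G A_Rᵀ φ + A_L ȷ_L + A_V ȷ_V + A_I ı = 0, L ȷ̇_L - A_Lᵀ φ = 0, and A_Vᵀ φ = v, with C, G, L symmetric positive semi-definite, then for H = ½φᵀA_C C A_Cᵀφ + ½ȷ_LᵀLȷ_L one has d/dt H = -φᵀ A_R G A_Rᵀ φ - φᵀ A_I ı - ȷ_Vᵀ v ≤ -⟨A_Iᵀφ, ı⟩ - ⟨v, ȷ_V⟩. -/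
/-!
Along a solution, `Ḣ = φ ⬝ᵥ (A_C C A_Cᵀ) φ̇ + ȷ_L ⬝ᵥ L ȷ̇_L` by symmetry of `C` and `L`. Substituting
the first MNA equation for `A_C C A_Cᵀ φ̇` and the second for `L ȷ̇_L`, the inductive terms
`φ ⬝ᵥ A_L ȷ_L` and `ȷ_L ⬝ᵥ A_Lᵀ φ` cancel, and the third equation turns `φ ⬝ᵥ A_V ȷ_V` into
`ȷ_V ⬝ᵥ v`. The inequality is the nonnegativity of the dissipated power `φ ⬝ᵥ A_R G A_Rᵀ φ`.
-/

open Matrix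

variable {m n : Type*} [Fintype m] [Fintype n]

theorem HasDerivAt.mulVec (M : Matrix m n ℝ) {g : ℝ → n → ℝ} {g' : n → ℝ} {t : ℝ}
    (hg : HasDerivAt g g' t) : HasDerivAt (fun s => M *ᵥ g s) (M *ᵥ g') t :=
  (LinearMap.toContinuousLinearMap (mulVecLin M)).hasFDerivAt.comp_hasDerivAt t hg

theorem HasDerivAt.dotProduct {f g : ℝ → n → ℝ} {f' g' : n → ℝ} {t : ℝ}
    (hf : HasDerivAt f f' t) (hg : HasDerivAt g g' t) :
    HasDerivAt (fun s => f s ⬝ᵥ g s) (f' ⬝ᵥ g t + f t ⬝ᵥ g') t := by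
  have h := HasDerivAt.fun_sum (u := Finset.univ) fun i _ =>
    (hasDerivAt_pi.1 hf i).fun_mul (hasDerivAt_pi.1 hg i)
  unfold _root_.dotProduct
  rwa [← Finset.sum_add_distrib]

theorem HasDerivAt.half_dotProduct_mulVec_self {M : Matrix n n ℝ} (hM : M.IsSymm)
    {f : ℝ → n → ℝ} {f' : n → ℝ} {t : ℝ} (hf : HasDerivAt f f' t) :
    HasDerivAt (fun s => (1 / 2) * (f s ⬝ᵥ M *ᵥ f s)) (f t ⬝ᵥ M *ᵥ f') t := by
  have h := (hf.dotProduct (hf.mulVec M)).const_mul (1 / 2)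
  rwa [← hM.eq, dotProduct_transpose_mulVec, hM.eq, ← two_mul, ← mul_assoc,
    one_div_mul_cancel two_ne_zero, one_mul] at h

theorem Matrix.PosSemidef.mul_mul_transpose_same {A : Matrix n n ℝ} (hA : A.PosSemidef)
    (B : Matrix m n ℝ) : (B * A * Bᵀ).PosSemidef := by
  simpa using hA.mul_mul_conjTranspose_same B

theorem mna_power_balance {bL bV bI : Type*} [Fintype bL] [Fintype bV] [Fintype bI] (K R : Matrix n n ℝ)
    (AL : Matrix n bL ℝ) (AV : Matrix n bV ℝ) (AI : Matrix n bI ℝ) (L : Matrix bL bL ℝ)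
    {φ φ' : n → ℝ} {jL jL' : bL → ℝ} {jV v : bV → ℝ} {icur : bI → ℝ}
    (heq1 : K *ᵥ φ' + R *ᵥ φ + AL *ᵥ jL + AV *ᵥ jV + AI *ᵥ icur = 0)
    (heq2 : L *ᵥ jL' - ALᵀ *ᵥ φ = 0) (heq3 : AVᵀ *ᵥ φ = v) :
    φ ⬝ᵥ K *ᵥ φ' + jL ⬝ᵥ L *ᵥ jL' = -(φ ⬝ᵥ R *ᵥ φ) - φ ⬝ᵥ AI *ᵥ icur - jV ⬝ᵥ v := by
  have hK : K *ᵥ φ' = -(R *ᵥ φ + AL *ᵥ jL + AV *ᵥ jV + AI *ᵥ icur) :=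
    eq_neg_of_add_eq_zero_left (by rw [← heq1]; abel)
  rw [hK, sub_eq_zero.1 heq2, dotProduct_transpose_mulVec, ← heq3, dotProduct_transpose_mulVec]
  simp only [dotProduct_neg, dotProduct_add]
  ring

theorem stmt_14 {nφ bC bR bL bV bI : ℕ}
    (AC : Matrix (Fin nφ) (Fin bC) ℝ) (AR : Matrix (Fin nφ) (Fin bR) ℝ)
    (AL : Matrix (Fin nφ) (Fin bL) ℝ) (AV : Matrix (Fin nφ) (Fin bV) ℝ)
    (AI : Matrix (Fin nφ) (Fin bI) ℝ)
    (C : Matrix (Fin bC) (Fin bC) ℝ) (G : Matrix (Fin bR) (Fin bR) ℝ)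
    (L : Matrix (Fin bL) (Fin bL) ℝ)
    (hC : C.PosSemidef) (hG : G.PosSemidef) (hL : L.PosSemidef)
    (t₀ tf : ℝ)
    (φ φ' : ℝ → Fin nφ → ℝ) (jL jL' : ℝ → Fin bL → ℝ) (jV : ℝ → Fin bV → ℝ)
    (icur : ℝ → Fin bI → ℝ) (v : ℝ → Fin bV → ℝ)
    (hφ : ∀ t ∈ Set.Icc t₀ tf, ∀ i, HasDerivAt (fun s => φ s i) (φ' t i) t)
    (hjL : ∀ t ∈ Set.Icc t₀ tf, ∀ i, HasDerivAt (fun s => jL s i) (jL' t i) t)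
    (heq1 : ∀ t ∈ Set.Icc t₀ tf,
      (AC * C * ACᵀ) *ᵥ φ' t + (AR * G * ARᵀ) *ᵥ φ t + AL *ᵥ jL t
        + AV *ᵥ jV t + AI *ᵥ icur t = 0)
    (heq2 : ∀ t ∈ Set.Icc t₀ tf, L *ᵥ jL' t - ALᵀ *ᵥ φ t = 0)
    (heq3 : ∀ t ∈ Set.Icc t₀ tf, AVᵀ *ᵥ φ t = v t) :
    ∀ t ∈ Set.Icc t₀ tf,
      HasDerivAt
        (fun s => (1 / 2) * (φ s ⬝ᵥ (AC * C * ACᵀ) *ᵥ φ s)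
          + (1 / 2) * (jL s ⬝ᵥ L *ᵥ jL s))
        (-(φ t ⬝ᵥ (AR * G * ARᵀ) *ᵥ φ t) - φ t ⬝ᵥ AI *ᵥ icur t - jV t ⬝ᵥ v t) t ∧
      -(φ t ⬝ᵥ (AR * G * ARᵀ) *ᵥ φ t) - φ t ⬝ᵥ AI *ᵥ icur t - jV t ⬝ᵥ v t
        ≤ -((AIᵀ *ᵥ φ t) ⬝ᵥ icur t) - v t ⬝ᵥ jV t := by
  intro t ht
  have hK : (AC * C * ACᵀ).IsSymm :=
    isHermitian_iff_isSymm.1 (hC.mul_mul_transpose_same AC).isHermitian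
  have hH := ((hasDerivAt_pi.2 (hφ t ht)).half_dotProduct_mulVec_self hK).fun_add
    ((hasDerivAt_pi.2 (hjL t ht)).half_dotProduct_mulVec_self
      (isHermitian_iff_isSymm.1 hL.isHermitian))
  rw [mna_power_balance _ _ AL AV AI L (heq1 t ht) (heq2 t ht) (heq3 t ht)] at hH
  refine ⟨hH, ?_⟩
  have hdiss : 0 ≤ φ t ⬝ᵥ (AR * G * ARᵀ) *ᵥ φ t := by
    simpa using (hG.mul_mul_transpose_same AR).dotProduct_mulVec_nonneg (φ t)
  have hAI : φ t ⬝ᵥ AI *ᵥ icur t = (AIᵀ *ᵥ φ t) ⬝ᵥ icur t := by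
    rw [dotProduct_mulVec, mulVec_transpose]
  rw [hAI, dotProduct_comm (jV t)]
  linarith
end
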